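/- arXiv:1909.09501 — 8 statements merged into one kernel-verified Lean document; each statement's English description precedes it below -/
import Mathlib

section
/- Let A and B be n×n complex matrices such that every eigenvalue μ of A satisfies |Im μ| < π, and likewise every eigenvalue of B satisfies |Im μ| < π. If exp(A) = exp(B), then A = B. In other words, the matrix exponential is injective on the set U = {A : for all eigenvalues λ of A, |Im λ| < π}. -/
/-!
The exponential maps the generalized eigenspace `V_μ(T)` into `V_{e^μ}(exp T)`. Since the
generalized eigenspaces of `T` span the space and those of `exp T` are independent,
`V_w(exp T)` is exactly the sum of the `V_ν(T)` with `e^ν = w`. The exponential is injective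
on the strip `|Im| < π`, so for `T` and `S` with spectra in the strip, `exp T = exp S` gives
`V_μ(T) ≤ V_{e^μ}(exp S) = V_μ(S)`. For `x` in both, `T - μ` and `S - μ` are nilpotent on
`x`, so `m ↦ exp (m (T - μ)) x` and `m ↦ exp (m (S - μ)) x` are polynomials in `m ∈ ℕ` that
agree everywhere; their linear coefficients `(T - μ) x` and `(S - μ) x` therefore agree.
-/

open NormedSpace Finset Module
open scoped Nat

theorem Complex.exp_injOn_abs_im_lt_pi : Set.InjOn exp {z : ℂ | |z.im| < Real.pi} := by
  intro μ hμ ν hν h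
  simp only [Set.mem_ofPred_eq, abs_lt] at hμ hν
  rw [← log_exp hμ.1 hμ.2.le, h, log_exp hν.1 hν.2.le]

theorem eq_zero_of_forall_sum_natCast_pow_smul_eq_zero {K V : Type*} [Field K] [CharZero K]
    [AddCommGroup V] [Module K V] {d : ℕ} {c : ℕ → V}
    (h : ∀ m : ℕ, ∑ k ∈ range d, (m : K) ^ k • c k = 0) {k : ℕ} (hk : k < d) : c k = 0 := by
  refine (Module.forall_dual_apply_eq_zero_iff K (c k)).1 fun ℓ => ?_
  have hinj : Function.Injective fun j : Fin d => (j : K) :=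
    Nat.cast_injective.comp Fin.val_injective
  have hvan := Matrix.eq_zero_of_forall_index_sum_pow_mul_eq_zero hinj
    (v := fun i : Fin d => ℓ (c i)) fun j => by
      simpa [Fin.sum_univ_eq_sum_range fun i => (j : K) ^ i * ℓ (c i)]
        using congrArg ℓ (h j)
  exact congrFun hvan ⟨k, hk⟩

theorem NormedSpace.exp_eq_exp_smul_exp_sub_smul_one {𝔸 : Type*} [NormedRing 𝔸]
    [NormedAlgebra ℂ 𝔸] [CompleteSpace 𝔸] (a : 𝔸) (μ : ℂ) :
    exp a = Complex.exp μ • exp (a - μ • 1) := by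
  let +nondep : NormedAlgebra ℚ 𝔸 := .restrictScalars ℚ ℂ 𝔸
  calc exp a = exp (algebraMap ℂ 𝔸 μ + (a - μ • 1)) := by
        rw [Algebra.algebraMap_eq_smul_one, add_sub_cancel]
    _ = algebraMap ℂ 𝔸 (exp μ) * exp (a - μ • 1) := by
        rw [exp_add_of_commute (Algebra.commutes _ _), algebraMap_exp_comm]
    _ = Complex.exp μ • exp (a - μ • 1) := by
        rw [Complex.exp_eq_exp_ℂ, ← Algebra.smul_def]

namespace ContinuousLinearMap

theorem pow_apply_eq_zero_of_le {R M : Type*} [Semiring R] [TopologicalSpace M]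
    [AddCommMonoid M] [Module R M] {N : M →L[R] M} {k m : ℕ} {x : M} (hkm : k ≤ m)
    (hx : (N ^ k) x = 0) : (N ^ m) x = 0 := by
  rw [← Nat.sub_add_cancel hkm, pow_add, mul_apply_eq_comp, hx, map_zero]

section CommRing

variable {R M : Type*} [CommRing R] [TopologicalSpace M] [AddCommGroup M] [Module R M]
  [IsTopologicalAddGroup M] [ContinuousConstSMul R M]

theorem mem_maxGenEigenspace_iff (T : M →L[R] M) (μ : R) (x : M) :
    x ∈ End.maxGenEigenspace T.toLinearMap μ ↔ ∃ k : ℕ, ((T - μ • 1) ^ k) x = 0 := by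
  have hsub : T.toLinearMap - μ • 1 = (T - μ • 1).toLinearMap := rfl
  simp only [End.mem_maxGenEigenspace, hsub, ← toLinearMap_pow, coe_coe]

theorem mem_spectrum_of_maxGenEigenspace_ne_bot {T : M →L[R] M} {μ : R}
    (h : End.maxGenEigenspace T.toLinearMap μ ≠ ⊥) : μ ∈ spectrum R T := by
  have hμ : End.HasEigenvalue T.toLinearMap μ :=
    (End.hasUnifEigenvalue_iff_hasUnifEigenvalue_one (by simp)).1 h
  have hspec := hμ.mem_spectrum
  rw [spectrum.mem_iff, Algebra.algebraMap_eq_smul_one] at hspec ⊢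
  exact fun hunit => hspec (by simpa using hunit.map toLinearMapRingHom)

end CommRing

variable {E : Type*} [NormedAddCommGroup E] [NormedSpace ℂ E]

section Complete

variable [CompleteSpace E]

theorem exp_apply_of_pow_apply_eq_zero {N : E →L[ℂ] E} {d : ℕ} {x : E} (hx : (N ^ d) x = 0) :
    exp N x = ∑ k ∈ range d, (k ! : ℂ)⁻¹ • (N ^ k) x := by
  have hsum : HasSum (fun k => ((k ! : ℂ)⁻¹ • N ^ k) x) (exp N x) :=
    (exp_series_hasSum_exp' (𝕂 := ℂ) N).mapL (apply ℂ E x)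
  refine hsum.unique (hasSum_sum_of_ne_finset_zero fun k hk => ?_)
  rw [smul_apply, pow_apply_eq_zero_of_le (not_lt.1 (mem_range.not.1 hk)) hx, smul_zero]

theorem exp_sub_one_pow_apply_eq_zero {N : E →L[ℂ] E} {k : ℕ} {x : E} (hx : (N ^ k) x = 0) :
    ((exp N - 1) ^ k) x = 0 := by
  induction k generalizing x with
  | zero => simpa using hx
  | succ k ih =>
    rw [pow_succ, mul_apply_eq_comp]
    apply ih
    have hNk : (N ^ 1) ((N ^ k) x) = 0 := by rwa [← mul_apply_eq_comp, ← pow_add, add_comm]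
    have hcomm : Commute (N ^ k) (exp N) := ((Commute.refl N).pow_left k).exp_right
    rw [sub_apply, one_apply_eq_self, map_sub, ← mul_apply_eq_comp, hcomm.eq, mul_apply_eq_comp,
      exp_apply_of_pow_apply_eq_zero hNk]
    simp

theorem maxGenEigenspace_le_maxGenEigenspace_exp (T : E →L[ℂ] E) (μ : ℂ) :
    End.maxGenEigenspace T.toLinearMap μ ≤
      End.maxGenEigenspace (exp T).toLinearMap (Complex.exp μ) := by
  intro x hx
  obtain ⟨k, hk⟩ := (mem_maxGenEigenspace_iff T μ x).1 hx
  refine (mem_maxGenEigenspace_iff _ _ x).2 ⟨k, ?_⟩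
  rw [exp_eq_exp_smul_exp_sub_smul_one T μ, ← smul_sub, smul_pow, smul_apply,
    exp_sub_one_pow_apply_eq_zero hk, smul_zero]

theorem apply_eq_apply_of_exp_eq_of_pow_apply_eq_zero {N M : E →L[ℂ] E} (h : exp N = exp M)
    {d : ℕ} (hd : 1 < d) {x : E} (hN : (N ^ d) x = 0) (hM : (M ^ d) x = 0) : N x = M x := by
  let +nondep : NormedAlgebra ℚ (E →L[ℂ] E) := .restrictScalars ℚ ℂ _
  -- Both sides of `exp (m • N) x = exp (m • M) x` are polynomials in `m : ℕ`.
  have hcoeff : ∀ m : ℕ, ∑ k ∈ range d, (m : ℂ) ^ k •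
      ((k ! : ℂ)⁻¹ • ((N ^ k) x - (M ^ k) x)) = 0 := by
    intro m
    have hexp : exp ((m : ℂ) • N) = exp ((m : ℂ) • M) := by
      rw [Nat.cast_smul_eq_nsmul, Nat.cast_smul_eq_nsmul, exp_nsmul, exp_nsmul, h]
    have hmN : (((m : ℂ) • N) ^ d) x = 0 := by rw [smul_pow, smul_apply, hN, smul_zero]
    have hmM : (((m : ℂ) • M) ^ d) x = 0 := by rw [smul_pow, smul_apply, hM, smul_zero]
    have hexpx := congrArg (· x) hexp
    simp only [exp_apply_of_pow_apply_eq_zero hmN, exp_apply_of_pow_apply_eq_zero hmM,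
      smul_pow, smul_apply] at hexpx
    rw [← sub_eq_zero, ← sum_sub_distrib] at hexpx
    rw [← hexpx]
    refine sum_congr rfl fun k _ => ?_
    rw [smul_comm, smul_sub, smul_sub]
  simpa [sub_eq_zero] using eq_zero_of_forall_sum_natCast_pow_smul_eq_zero hcoeff hd

theorem apply_eq_apply_of_exp_eq_of_mem_maxGenEigenspace {T S : E →L[ℂ] E} (h : exp T = exp S)
    {μ : ℂ} {x : E} (hT : x ∈ End.maxGenEigenspace T.toLinearMap μ)
    (hS : x ∈ End.maxGenEigenspace S.toLinearMap μ) : T x = S x := by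
  obtain ⟨k, hk⟩ := (mem_maxGenEigenspace_iff T μ x).1 hT
  obtain ⟨l, hl⟩ := (mem_maxGenEigenspace_iff S μ x).1 hS
  have hexp : exp (T - μ • 1) = exp (S - μ • 1) := by
    rw [exp_eq_exp_smul_exp_sub_smul_one T μ, exp_eq_exp_smul_exp_sub_smul_one S μ] at h
    exact smul_right_injective _ (Complex.exp_ne_zero μ) h
  have hx := apply_eq_apply_of_exp_eq_of_pow_apply_eq_zero hexp (d := k + l + 2) (by omega)
    (pow_apply_eq_zero_of_le (by omega) hk) (pow_apply_eq_zero_of_le (by omega) hl)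
  simpa using hx

end Complete

section FiniteDimensional

variable [FiniteDimensional ℂ E]

theorem maxGenEigenspace_exp_eq_iSup (S : E →L[ℂ] E) (w : ℂ) :
    End.maxGenEigenspace (exp S).toLinearMap w =
      ⨆ (ν : ℂ) (_ : Complex.exp ν = w), End.maxGenEigenspace S.toLinearMap ν := by
  have hle :
      (fun w => ⨆ (ν : ℂ) (_ : Complex.exp ν = w), End.maxGenEigenspace S.toLinearMap ν) ≤
        End.maxGenEigenspace (exp S).toLinearMap := fun w =>
    iSup₂_le fun ν hν => hν ▸ maxGenEigenspace_le_maxGenEigenspace_exp S ν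
  have htop :
      ⨆ w, ⨆ (ν : ℂ) (_ : Complex.exp ν = w), End.maxGenEigenspace S.toLinearMap ν = ⊤ := by
    rw [iSup_comm]
    simp only [iSup_iSup_eq_right]
    exact End.iSup_maxGenEigenspace_eq_top _
  have heq := ((End.independent_maxGenEigenspace _).le_iff_eq_of_iSup_eq_top htop).1 hle
  exact (congrFun heq w).symm

theorem maxGenEigenspace_exp_le {S : E →L[ℂ] E} {μ : ℂ}
    (hμ : ∀ ν ∈ spectrum ℂ S, Complex.exp ν = Complex.exp μ → ν = μ) :
    End.maxGenEigenspace (exp S).toLinearMap (Complex.exp μ) ≤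
      End.maxGenEigenspace S.toLinearMap μ := by
  rw [maxGenEigenspace_exp_eq_iSup]
  refine iSup₂_le fun ν hν => ?_
  by_cases hbot : End.maxGenEigenspace S.toLinearMap ν = ⊥
  · simp [hbot]
  · rw [hμ ν (mem_spectrum_of_maxGenEigenspace_ne_bot hbot) hν]

theorem exp_injOn_abs_im_lt_pi :
    Set.InjOn (exp : (E →L[ℂ] E) → E →L[ℂ] E)
      {T | ∀ μ ∈ spectrum ℂ T, |μ.im| < Real.pi} := by
  intro T hT S hS h
  suffices hker : ∀ μ, End.maxGenEigenspace T.toLinearMap μ ≤ LinearMap.ker (T - S).toLinearMap by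
    have htop := (End.iSup_maxGenEigenspace_eq_top T.toLinearMap).symm.le.trans (iSup_le hker)
    ext x
    simpa [sub_eq_zero] using htop (Submodule.mem_top (x := x))
  intro μ x hx
  by_cases hbot : End.maxGenEigenspace T.toLinearMap μ = ⊥
  · rw [hbot, Submodule.mem_bot] at hx
    simp [hx]
  have hμ := hT μ (mem_spectrum_of_maxGenEigenspace_ne_bot hbot)
  have hxS : x ∈ End.maxGenEigenspace S.toLinearMap μ :=
    maxGenEigenspace_exp_le (fun ν hν => Complex.exp_injOn_abs_im_lt_pi (hS ν hν) hμ)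
      (h ▸ maxGenEigenspace_le_maxGenEigenspace_exp T μ hx)
  simpa [sub_eq_zero] using apply_eq_apply_of_exp_eq_of_mem_maxGenEigenspace h hx hxS

end FiniteDimensional

end ContinuousLinearMap

open scoped Matrix.Norms.Operator in
theorem Matrix.toEuclideanCLM_exp {𝕜 n : Type*} [RCLike 𝕜] [Fintype n] [DecidableEq n]
    (A : Matrix n n 𝕜) :
    toEuclideanCLM (n := n) (𝕜 := 𝕜) (exp A) = exp (toEuclideanCLM (n := n) (𝕜 := 𝕜) A) :=
  map_exp (toEuclideanCLM (n := n) (𝕜 := 𝕜)) (LinearMap.continuous_of_finiteDimensional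
    (toEuclideanCLM (n := n) (𝕜 := 𝕜)).toAlgEquiv.toLinearMap) A

/-- The matrix exponential is injective on the set of complex matrices all of whose
eigenvalues have imaginary part of absolute value less than `π`. -/
theorem matrix_exp_injective_of_spectrum_im_lt_pi {n : ℕ}
    (A B : Matrix (Fin n) (Fin n) ℂ)
    (hA : ∀ μ ∈ spectrum ℂ A, |μ.im| < Real.pi)
    (hB : ∀ μ ∈ spectrum ℂ B, |μ.im| < Real.pi)
    (h : NormedSpace.exp A = NormedSpace.exp B) :
    A = B := by
  let Φ := Matrix.toEuclideanCLM (n := Fin n) (𝕜 := ℂ)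
  refine EquivLike.injective Φ (ContinuousLinearMap.exp_injOn_abs_im_lt_pi ?_ ?_ ?_)
  · rwa [Set.mem_ofPred_eq, AlgEquiv.spectrum_eq Φ]
  · rwa [Set.mem_ofPred_eq, AlgEquiv.spectrum_eq Φ]
  · rw [← Matrix.toEuclideanCLM_exp, ← Matrix.toEuclideanCLM_exp, h]
end

section
/- Let A, E, F be n×n real matrices, and let D_X denote the Fréchet derivative of the matrix exponential at the matrix X (a linear map on n×n matrices). Then the adjoint of D_A with respect to the Frobenius (trace) inner product is D_{Aᵀ}; that is, trace((D_A(E))ᵀ F) = trace(Eᵀ D_{Aᵀ}(F)) for all E, F. -/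
/-!
For a tracial functional `τ`, termwise differentiation of the exponential series shows that
`y ↦ τ (exp y)` has derivative `h ↦ τ (exp y * h)` everywhere. Differentiating once more gives
the Hessian `(h, k) ↦ τ (D_x(h) * k)`, which is symmetric. With `τ = trace`, and since
`exp Xᵀ = (exp X)ᵀ` gives `D_{Aᵀ}(F) = (D_A(Fᵀ))ᵀ`, this symmetry is exactly the adjoint identity.
-/

open Matrix

attribute [local instance] Matrix.linftyOpNormedRing Matrix.linftyOpNormedAlgebra

open NormedSpace ContinuousLinearMap Nat

lemma norm_pow_le_max_norm_one_mul {𝔸 : Type*} [NormedRing 𝔸] (a : 𝔸) (n : ℕ) :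
    ‖a ^ n‖ ≤ max ‖(1 : 𝔸)‖ 1 * ‖a‖ ^ n := by
  cases n with
  | zero => simp
  | succ n =>
    exact (norm_pow_le' a n.succ_pos).trans
      (le_mul_of_one_le_left (by positivity) (le_max_right _ _))

section TraceFunctional

variable {𝕂 𝔸 : Type*} [RCLike 𝕂] [NormedRing 𝔸] [NormedAlgebra 𝕂 𝔸] {τ : 𝔸 →L[𝕂] 𝕂}

lemma hasFDerivAt_map_pow_succ (hτ : ∀ a b, τ (a * b) = τ (b * a)) (k : ℕ) (x : 𝔸) :
    HasFDerivAt (fun y => τ (y ^ (k + 1))) ((k + 1) • τ.comp (mul 𝕂 𝔸 (x ^ k))) x := by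
  refine (τ.hasFDerivAt.comp x (hasFDerivAt_pow' (k + 1))).congr_fderiv (ext fun h => ?_)
  have cyclic : ∀ i ∈ Finset.range (k + 1), τ (x ^ (k - i) * h * x ^ i) = τ (x ^ k * h) := by
    intro i hi
    rw [hτ, ← mul_assoc, ← pow_add, Nat.add_sub_cancel' (Finset.mem_range_succ_iff.1 hi)]
  simp [map_sum, Finset.sum_congr rfl cyclic]

variable [CompleteSpace 𝔸]

lemma hasFDerivAt_map_exp (hτ : ∀ a b, τ (a * b) = τ (b * a)) (x : 𝔸) :
    HasFDerivAt (fun y => τ (exp y)) (τ.comp (mul 𝕂 𝔸 (exp x))) x := by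
  let L : 𝔸 →L[𝕂] 𝔸 →L[𝕂] 𝕂 := (compL 𝕂 𝔸 𝔸 𝕂 τ).comp (mul 𝕂 𝔸)
  let R := ‖x‖ + 1
  have hx : x ∈ Metric.ball 0 R := by simp [R]
  have hseries (y : 𝔸) :
      HasSum (fun k => ((k + 1)! : 𝕂)⁻¹ • τ (y ^ (k + 1))) (τ (exp y) - τ 1) := by
    simpa using (hasSum_nat_add_iff' 1).2 ((exp_series_hasSum_exp' (𝕂 := 𝕂) y).mapL τ)
  have hterm (k : ℕ) (y : 𝔸) : HasFDerivAt (fun y => ((k + 1)! : 𝕂)⁻¹ • τ (y ^ (k + 1)))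
      ((k ! : 𝕂)⁻¹ • L (y ^ k)) y := by
    refine ((hasFDerivAt_map_pow_succ hτ k y).const_smul ((k + 1)! : 𝕂)⁻¹).congr_fderiv ?_
    rw [← Nat.cast_smul_eq_nsmul 𝕂, smul_smul, Nat.factorial_succ]
    congr 1
    push_cast
    field_simp
  have hbound (k : ℕ) (y : 𝔸) (hy : y ∈ Metric.ball 0 R) :
      ‖(k ! : 𝕂)⁻¹ • L (y ^ k)‖ ≤ ‖L‖ * max ‖(1 : 𝔸)‖ 1 * (R ^ k / k !) := by
    have hyR : ‖y‖ ≤ R := (mem_ball_zero_iff.1 hy).le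
    calc ‖(k ! : 𝕂)⁻¹ • L (y ^ k)‖ = (k ! : ℝ)⁻¹ * ‖L (y ^ k)‖ := by
          rw [norm_smul, norm_inv, RCLike.norm_natCast]
      _ ≤ (k ! : ℝ)⁻¹ * (‖L‖ * (max ‖(1 : 𝔸)‖ 1 * R ^ k)) := by
          gcongr
          refine (L.le_opNorm _).trans ?_
          gcongr
          exact (norm_pow_le_max_norm_one_mul y k).trans (by gcongr)
      _ = ‖L‖ * max ‖(1 : 𝔸)‖ 1 * (R ^ k / k !) := by ring
  have hsum : Summable fun k => ‖L‖ * max ‖(1 : 𝔸)‖ 1 * (R ^ k / k !) :=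
    (Real.summable_pow_div_factorial R).mul_left _
  have hderiv : HasSum (fun k => (k ! : 𝕂)⁻¹ • L (x ^ k)) (L (exp x)) := by
    simpa using (exp_series_hasSum_exp' (𝕂 := 𝕂) x).mapL L
  have h := hasFDerivAt_tsum_of_isPreconnected hsum Metric.isOpen_ball
    (let _ := NormedSpace.restrictScalars ℝ 𝕂 𝔸; Metric.isPreconnected_ball)
    (fun k y _ => hterm k y) hbound hx (hseries x).summable hx
  rw [hderiv.tsum_eq] at h
  have hfun : (fun y => τ (exp y)) = fun y => τ 1 + ∑' k, ((k + 1)! : 𝕂)⁻¹ • τ (y ^ (k + 1)) := by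
    funext y
    rw [(hseries y).tsum_eq, add_sub_cancel]
  rw [hfun]
  exact h.const_add (τ 1)

lemma map_fderiv_exp_mul_comm (hτ : ∀ a b, τ (a * b) = τ (b * a)) (x h k : 𝔸) :
    τ (fderiv 𝕂 exp x h * k) = τ (fderiv 𝕂 exp x k * h) := by
  let L : 𝔸 →L[𝕂] 𝔸 →L[𝕂] 𝕂 := (compL 𝕂 𝔸 𝔸 𝕂 τ).comp (mul 𝕂 𝔸)
  have hexp : HasFDerivAt exp (fderiv 𝕂 exp x) x := (exp_analytic x).differentiableAt.hasFDerivAt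
  simpa [L] using second_derivative_symmetric (hasFDerivAt_map_exp hτ)
    (L.hasFDerivAt.comp x hexp) h k

end TraceFunctional

section Matrix

variable {m 𝕂 : Type*} [Fintype m] [DecidableEq m] [RCLike 𝕂]

lemma fderiv_exp_transpose (A F : Matrix m m 𝕂) :
    fderiv 𝕂 exp Aᵀ F = (fderiv 𝕂 exp A Fᵀ)ᵀ := by
  let T : Matrix m m 𝕂 ≃L[𝕂] Matrix m m 𝕂 :=
    (transposeLinearEquiv m m 𝕂 𝕂).toContinuousLinearEquiv
  have hexp : (exp : Matrix m m 𝕂 → Matrix m m 𝕂) = T ∘ exp ∘ T := by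
    funext X
    simp [T, exp_transpose]
  conv_lhs => rw [hexp]
  -- `T` carries the product topology of `Matrix`, equal to the norm topology only up to defeq.
  erw [T.comp_fderiv, T.comp_right_fderiv]
  rfl

lemma trace_fderiv_exp_mul_comm (A E G : Matrix m m 𝕂) :
    (fderiv 𝕂 exp A E * G).trace = (fderiv 𝕂 exp A G * E).trace :=
  map_fderiv_exp_mul_comm (τ := (traceLinearMap m 𝕂 𝕂).toContinuousLinearMap) trace_mul_comm A E G

end Matrix

/-- The adjoint, with respect to the Frobenius (trace) inner product, of the Fréchet
derivative of the matrix exponential at `A` is the Fréchet derivative at `Aᵀ`. -/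
theorem fderiv_matrix_exp_adjoint {n : ℕ} (A E F : Matrix (Fin n) (Fin n) ℝ) :
    ((fderiv ℝ (NormedSpace.exp) A E)ᵀ * F).trace =
      (Eᵀ * fderiv ℝ (NormedSpace.exp) Aᵀ F).trace := by
  calc ((fderiv ℝ exp A E)ᵀ * F).trace = (fderiv ℝ exp A E * Fᵀ).trace := by
        rw [← trace_transpose, transpose_mul, transpose_transpose, trace_mul_comm]
    _ = (fderiv ℝ exp A Fᵀ * E).trace := trace_fderiv_exp_mul_comm A E Fᵀ
    _ = (Eᵀ * fderiv ℝ exp Aᵀ F).trace := by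
        rw [fderiv_exp_transpose, trace_transpose_mul, trace_mul_comm]
end

section
/- Let a : ℕ → ℝ be coefficients such that for every r ≥ 0 the series ∑ₖ |aₖ| rᵏ / k! converges (i.e., the power series φ(x) = ∑ₖ (aₖ/k!) xᵏ is entire). Define the matrix function Φ on n×n real matrices by Φ(X) = ∑ₖ (aₖ/k!) Xᵏ. Then Φ is differentiable, and for every X the adjoint of its Fréchet derivative dΦ_X with respect to the Frobenius (trace) inner product equals dΦ_{Xᵀ}: for all n×n real matrices E, F, trace((dΦ_X(E))ᵀ F) = trace(Eᵀ dΦ_{Xᵀ}(F)). -/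
/-!
The derivative of `X ↦ Xᵏ` is `Dₖ(X) : E ↦ ∑_{i<k} X^(k-1-i) E X^i`, and cyclicity of the trace
gives `⟨X^(k-1-i) E X^i, F⟩ = ⟨E, (Xᵀ)^(k-1-i) F (Xᵀ)^i⟩`, so the claim holds for every monomial.
On the ball of radius `r` one has `‖cₖ Dₖ(X)‖ ≤ const · |cₖ| (2r)ᵏ`, which is summable because the
series is entire; so it may be differentiated termwise, and the identity passes to the sum since
both sides are continuous linear functions of the derivative.
-/

open Matrix

attribute [local instance] Matrix.linftyOpNormedRing Matrix.linftyOpNormedAlgebra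

theorem norm_pow_le_mul_pow {𝔸 : Type*} [NormedRing 𝔸] {x : 𝔸} {r : ℝ} (hx : ‖x‖ ≤ r)
    (m : ℕ) : ‖x ^ m‖ ≤ max ‖(1 : 𝔸)‖ 1 * r ^ m := by
  rcases Nat.eq_zero_or_pos m with rfl | hm
  · simp
  · calc ‖x ^ m‖ ≤ ‖x‖ ^ m := norm_pow_le' x hm
      _ ≤ r ^ m := by gcongr
      _ ≤ max ‖(1 : 𝔸)‖ 1 * r ^ m :=
        le_mul_of_one_le_left (pow_nonneg ((norm_nonneg x).trans hx) m) (le_max_right _ _)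

section PowDeriv

variable (𝕜 : Type*) {𝔸 : Type*} [NontriviallyNormedField 𝕜] [NormedRing 𝔸] [NormedAlgebra 𝕜 𝔸]

noncomputable def powDeriv (k : ℕ) (x : 𝔸) : 𝔸 →L[𝕜] 𝔸 :=
  ∑ i ∈ Finset.range k, ContinuousLinearMap.mulLeftRight 𝕜 𝔸 (x ^ (k - 1 - i)) (x ^ i)

variable {𝕜}

theorem powDeriv_apply (k : ℕ) (x e : 𝔸) :
    powDeriv 𝕜 k x e = ∑ i ∈ Finset.range k, x ^ (k - 1 - i) * e * x ^ i := by
  simp [powDeriv]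

theorem hasFDerivAt_pow_powDeriv (k : ℕ) (x : 𝔸) :
    HasFDerivAt (fun y : 𝔸 => y ^ k) (powDeriv 𝕜 k x) x := by
  convert hasFDerivAt_pow' (𝕜 := 𝕜) k (x := x) using 1
  ext e
  simp [powDeriv_apply, Nat.pred_eq_sub_one]

theorem norm_powDeriv_le {x : 𝔸} {r : ℝ} (hr : 1 ≤ r) (hx : ‖x‖ ≤ r) (k : ℕ) :
    ‖powDeriv 𝕜 k x‖ ≤ max ‖(1 : 𝔸)‖ 1 ^ 2 * (2 * r) ^ k := by
  set C := max ‖(1 : 𝔸)‖ 1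
  calc ‖powDeriv 𝕜 k x‖
      ≤ ∑ i ∈ Finset.range k, ‖x ^ (k - 1 - i)‖ * ‖x ^ i‖ :=
        (norm_sum_le _ _).trans <| Finset.sum_le_sum fun i _ =>
          ContinuousLinearMap.opNorm_mulLeftRight_apply_apply_le 𝕜 𝔸 _ _
    _ ≤ ∑ i ∈ Finset.range k, C ^ 2 * r ^ (k - 1) := by
        refine Finset.sum_le_sum fun i hi => ?_
        have hexp : k - 1 - i + i = k - 1 := by
          have := Finset.mem_range.mp hi; omega
        calc ‖x ^ (k - 1 - i)‖ * ‖x ^ i‖ ≤ (C * r ^ (k - 1 - i)) * (C * r ^ i) :=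
              mul_le_mul (norm_pow_le_mul_pow hx _) (norm_pow_le_mul_pow hx _)
                (norm_nonneg _) ((norm_nonneg _).trans (norm_pow_le_mul_pow hx _))
          _ = C ^ 2 * r ^ (k - 1) := by rw [mul_mul_mul_comm, ← pow_add, hexp, ← sq]
    _ = C ^ 2 * (k * r ^ (k - 1)) := by
        rw [Finset.sum_const, Finset.card_range, nsmul_eq_mul, mul_left_comm]
    _ ≤ C ^ 2 * (2 * r) ^ k := by
        gcongr
        rw [mul_pow]
        exact mul_le_mul (mod_cast Nat.lt_two_pow_self.le)
          (pow_le_pow_right₀ hr (Nat.sub_le k 1)) (by positivity) (by positivity)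

theorem norm_smul_powDeriv_le {c : 𝕜} {x : 𝔸} {r : ℝ} (hr : 1 ≤ r) (hx : ‖x‖ ≤ r) (k : ℕ) :
    ‖c • powDeriv 𝕜 k x‖ ≤ max ‖(1 : 𝔸)‖ 1 ^ 2 * (‖c‖ * (2 * r) ^ k) := by
  rw [norm_smul, mul_left_comm]
  exact mul_le_mul_of_nonneg_left (norm_powDeriv_le hr hx k) (norm_nonneg c)

theorem summable_smul_powDeriv [CompleteSpace 𝔸] {c : ℕ → 𝕜}
    (hc : ∀ r, 0 ≤ r → Summable fun k => ‖c k‖ * r ^ k) (x : 𝔸) :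
    Summable fun k => c k • powDeriv 𝕜 k x := by
  have hr : 1 ≤ ‖x‖ + 1 := le_add_of_nonneg_left (norm_nonneg x)
  exact .of_norm_bounded ((hc _ (by positivity)).mul_left (max ‖(1 : 𝔸)‖ 1 ^ 2))
    fun k => norm_smul_powDeriv_le hr (le_add_of_nonneg_right zero_le_one) k

end PowDeriv

theorem hasFDerivAt_tsum_smul_pow {𝕜 𝔸 : Type*} [RCLike 𝕜] [NormedRing 𝔸] [NormedAlgebra 𝕜 𝔸]
    [CompleteSpace 𝔸] {c : ℕ → 𝕜} (hc : ∀ r, 0 ≤ r → Summable fun k => ‖c k‖ * r ^ k)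
    (x : 𝔸) :
    HasFDerivAt (fun y : 𝔸 => ∑' k, c k • y ^ k) (∑' k, c k • powDeriv 𝕜 k x) x := by
  -- the real structure only serves to see that balls are preconnected
  let _ := NormedSpace.restrictScalars ℝ 𝕜 𝔸
  set r := ‖x‖ + 1
  have hr : 1 ≤ r := le_add_of_nonneg_left (norm_nonneg x)
  exact hasFDerivAt_tsum_of_isPreconnected ((hc _ (by positivity)).mul_left
    (max ‖(1 : 𝔸)‖ 1 ^ 2)) Metric.isOpen_ball Metric.isPreconnected_ball
    (fun k y _ => (hasFDerivAt_pow_powDeriv k y).const_smul (c k))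
    (fun k y hy => norm_smul_powDeriv_le hr (mem_ball_zero_iff.mp hy).le k)
    (Metric.mem_ball_self (by positivity))
    (hasSum_single 0 fun k hk => by simp [zero_pow hk]).summable
    (mem_ball_zero_iff.mpr (lt_add_one _))

namespace Matrix

variable {m R : Type*} [Fintype m]

theorem trace_transpose_mul_mul_mul [CommRing R] (A B C D : Matrix m m R) :
    trace (Dᵀ * (A * B * C)) = trace (Bᵀ * (Aᵀ * D * Cᵀ)) := by
  rw [← trace_transpose (Bᵀ * _)]
  simp only [transpose_mul, transpose_transpose, Matrix.mul_assoc]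
  rw [trace_mul_comm, Matrix.mul_assoc, Matrix.mul_assoc, ← Matrix.mul_assoc A,
    trace_mul_comm (A * B), Matrix.mul_assoc]

variable [DecidableEq m] [NontriviallyNormedField R]

theorem trace_transpose_mul_smul_powDeriv (c : R) (k : ℕ) (X E F : Matrix m m R) :
    trace (Fᵀ * (c • powDeriv R k X) E) = trace (Eᵀ * (c • powDeriv R k Xᵀ) F) := by
  simp only [_root_.smul_apply, powDeriv_apply, Matrix.mul_smul, Matrix.mul_sum, trace_smul,
    trace_sum]
  congr 1
  refine Finset.sum_congr rfl fun i _ => ?_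
  rw [trace_transpose_mul_mul_mul, transpose_pow, transpose_pow]

theorem trace_transpose_mul_tsum_apply [CompleteSpace R] {ι : Type*}
    {L L' : ι → Matrix m m R →L[R] Matrix m m R} (hL : Summable L) (hL' : Summable L')
    (h : ∀ i E F, trace (Fᵀ * L i E) = trace (Eᵀ * L' i F)) (E F : Matrix m m R) :
    trace (Fᵀ * (∑' i, L i) E) = trace (Eᵀ * (∑' i, L' i) F) := by
  let pairing (G H : Matrix m m R) : (Matrix m m R →L[R] Matrix m m R) →L[R] R :=
    LinearMap.toContinuousLinearMap (traceLinearMap m R R ∘ₗ LinearMap.mulLeft R G ∘ₗ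
      (ContinuousLinearMap.apply R (Matrix m m R) H).toLinearMap)
  show pairing Fᵀ E (∑' i, L i) = pairing Eᵀ F (∑' i, L' i)
  rw [(pairing Fᵀ E).map_tsum hL, (pairing Eᵀ F).map_tsum hL']
  exact tsum_congr fun i => h i E F

end Matrix

/-- For an entire real power series `φ(x) = ∑ₖ (aₖ / k!) xᵏ`, the associated matrix
function `Φ(X) = ∑ₖ (aₖ / k!) Xᵏ` is differentiable and the adjoint of its Fréchet
derivative at `X`, with respect to the Frobenius (trace) inner product, is the Fréchet
derivative at `Xᵀ`. -/
theorem fderiv_matrix_analytic_adjoint {n : ℕ} (a : ℕ → ℝ)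
    (ha : ∀ r : ℝ, 0 ≤ r → Summable fun k : ℕ => |a k| * r ^ k / (Nat.factorial k : ℝ)) :
    Differentiable ℝ
      (fun X : Matrix (Fin n) (Fin n) ℝ =>
        ∑' k : ℕ, (a k / (Nat.factorial k : ℝ)) • X ^ k) ∧
    ∀ X E F : Matrix (Fin n) (Fin n) ℝ,
      ((fderiv ℝ
            (fun X : Matrix (Fin n) (Fin n) ℝ =>
              ∑' k : ℕ, (a k / (Nat.factorial k : ℝ)) • X ^ k) X E)ᵀ * F).trace =
        (Eᵀ *
          fderiv ℝ
            (fun X : Matrix (Fin n) (Fin n) ℝ =>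
              ∑' k : ℕ, (a k / (Nat.factorial k : ℝ)) • X ^ k) Xᵀ F).trace := by
  have hc (r : ℝ) (hr : 0 ≤ r) : Summable fun k => ‖a k / (Nat.factorial k : ℝ)‖ * r ^ k :=
    (ha r hr).congr fun k => by rw [Real.norm_eq_abs, abs_div, Nat.abs_cast, div_mul_eq_mul_div]
  refine ⟨fun X => (hasFDerivAt_tsum_smul_pow hc X).differentiableAt, fun X E F => ?_⟩
  -- restated so that `fderiv` carries the same instance arguments as in the goal
  have hD (X : Matrix (Fin n) (Fin n) ℝ) : fderiv ℝ
      (fun X : Matrix (Fin n) (Fin n) ℝ => ∑' k : ℕ, (a k / (Nat.factorial k : ℝ)) • X ^ k) X =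
      ∑' k, (a k / (Nat.factorial k : ℝ)) • powDeriv ℝ k X :=
    (hasFDerivAt_tsum_smul_pow hc X).fderiv
  rw [hD, hD, ← trace_transpose, transpose_mul, transpose_transpose]
  exact trace_transpose_mul_tsum_apply (summable_smul_powDeriv hc X)
    (summable_smul_powDeriv hc Xᵀ) (fun k => trace_transpose_mul_smul_powDeriv _ k X) E F
end

section
/- Gradient of the dynamic Lie trivialization: let B be an invertible n×n real matrix and define exp_B(A) = B · exp(B⁻¹A) for n×n real matrices A. Let f be a real-valued function on n×n real matrices that is differentiable at exp_B(A) with (Frobenius) gradient G, and let D' be the Fréchet derivative of the matrix exponential at (B⁻¹A)ᵀ. Then f ∘ exp_B is differentiable at A with gradient (B⁻¹)ᵀ · D'(Bᵀ G); i.e., grad(f ∘ exp_B)(A) = (B⁻¹)ᵀ (d exp)_{(B⁻¹A)ᵀ}(Bᵀ grad f(exp_B(A))). -/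
/-!
By the chain rule, the derivative of `X ↦ f (B * exp (B⁻¹ * X))` at `A` is
`H ↦ tr (Gᵀ * B * D (B⁻¹ * H))` with `D = (d exp)_{B⁻¹A}`. Two symmetries of `D` move it onto `G`:
termwise in the series `D = ∑ₖ (d Xᵏ)/k!`, cyclicity of the trace makes `D` self-adjoint for the
pairing `(L, X) ↦ tr (L * X)`, and since `exp` commutes with transposition so does its derivative,
`(d exp)_{Mᵀ} (Kᵀ) = ((d exp)_M K)ᵀ`.
-/

open Matrix

attribute [local instance] Matrix.linftyOpNormedRing Matrix.linftyOpNormedAlgebra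

section ExpFDeriv

open scoped Nat

variable {𝕂 𝔸 : Type*} [RCLike 𝕂] [NormedRing 𝔸] [NormedAlgebra 𝕂 𝔸]

lemma norm_pow_le_max_one_mul (y : 𝔸) (a : ℕ) : ‖y ^ a‖ ≤ max 1 ‖(1 : 𝔸)‖ * ‖y‖ ^ a := by
  rcases Nat.eq_zero_or_pos a with rfl | ha
  · simp
  · exact (norm_pow_le' y ha).trans (le_mul_of_one_le_left (by positivity) (le_max_left _ _))

lemma fderiv_pow_apply (y H : 𝔸) (k : ℕ) :
    fderiv 𝕂 (fun x : 𝔸 => x ^ k) y H = ∑ i ∈ Finset.range k, y ^ (k - 1 - i) * H * y ^ i := by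
  simp [fderiv_pow_ring', mul_assoc]

lemma norm_fderiv_pow_le (y : 𝔸) (k : ℕ) :
    ‖fderiv 𝕂 (fun x : 𝔸 => x ^ k) y‖ ≤ k * (max 1 ‖(1 : 𝔸)‖ ^ 2 * ‖y‖ ^ (k - 1)) := by
  refine ContinuousLinearMap.opNorm_le_bound _ (by positivity) fun H => ?_
  set c := max 1 ‖(1 : 𝔸)‖
  rw [fderiv_pow_apply]
  calc ‖∑ i ∈ Finset.range k, y ^ (k - 1 - i) * H * y ^ i‖
      ≤ ∑ i ∈ Finset.range k, c ^ 2 * ‖y‖ ^ (k - 1) * ‖H‖ := by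
        refine (norm_sum_le _ _).trans (Finset.sum_le_sum fun i hi => ?_)
        have hi : k - 1 - i + i = k - 1 := by have := Finset.mem_range.mp hi; omega
        calc ‖y ^ (k - 1 - i) * H * y ^ i‖ ≤ ‖y ^ (k - 1 - i)‖ * ‖H‖ * ‖y ^ i‖ := norm_mul₃_le
          _ ≤ c * ‖y‖ ^ (k - 1 - i) * ‖H‖ * (c * ‖y‖ ^ i) := by
            gcongr <;> exact norm_pow_le_max_one_mul y _
          _ = c ^ 2 * ‖y‖ ^ (k - 1) * ‖H‖ := by rw [← hi, pow_add, Nat.add_sub_cancel]; ring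
    _ = k * (c ^ 2 * ‖y‖ ^ (k - 1)) * ‖H‖ := by
      rw [Finset.sum_const, Finset.card_range, nsmul_eq_mul]; ring

lemma hasSum_fderiv_exp [CompleteSpace 𝔸] (x : 𝔸) :
    HasSum (fun k => (k !⁻¹ : 𝕂) • fderiv 𝕂 (fun y : 𝔸 => y ^ k) x)
      (fderiv 𝕂 NormedSpace.exp x) := by
  set r := ‖x‖ + 1
  set c := max 1 ‖(1 : 𝔸)‖
  have hr : 1 ≤ r := by simp [r]
  have bound : ∀ k (y : 𝔸), ‖y‖ ≤ r →
      ‖(k !⁻¹ : 𝕂) • fderiv 𝕂 (fun y : 𝔸 => y ^ k) y‖ ≤ c ^ 2 * ((2 * r) ^ k / k !) := by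
    intro k y hy
    have hk : (k : ℝ) ≤ 2 ^ k := by exact_mod_cast k.lt_two_pow_self.le
    have hyr : ‖y‖ ^ (k - 1) ≤ r ^ k :=
      (pow_le_pow_left₀ (norm_nonneg y) hy _).trans (pow_le_pow_right₀ hr (Nat.sub_le k 1))
    calc ‖(k !⁻¹ : 𝕂) • fderiv 𝕂 (fun y : 𝔸 => y ^ k) y‖
        ≤ (k ! : ℝ)⁻¹ * (k * (c ^ 2 * ‖y‖ ^ (k - 1))) := by
          rw [norm_smul, norm_inv, RCLike.norm_natCast]
          gcongr
          exact norm_fderiv_pow_le y k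
      _ ≤ (k ! : ℝ)⁻¹ * (2 ^ k * (c ^ 2 * r ^ k)) := by gcongr
      _ = c ^ 2 * ((2 * r) ^ k / k !) := by rw [mul_pow]; ring
  have hu : Summable fun k : ℕ => c ^ 2 * ((2 * r) ^ k / k !) :=
    (Real.summable_pow_div_factorial _).mul_left _
  have hderiv : HasFDerivAt NormedSpace.exp
      (∑' k : ℕ, (k !⁻¹ : 𝕂) • fderiv 𝕂 (fun y : 𝔸 => y ^ k) x) x := by
    rw [NormedSpace.exp_eq_tsum 𝕂]
    refine hasFDerivAt_tsum_of_isPreconnected hu Metric.isOpen_ball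
      (letI := NormedSpace.restrictScalars ℝ 𝕂 𝔸; (convex_ball x 1).isPreconnected)
      (fun k y _ => ((differentiableAt_pow k).hasFDerivAt).const_smul _)
      (fun k y hy => bound k y ?_) (Metric.mem_ball_self one_pos)
      (NormedSpace.expSeries_summable' x) (Metric.mem_ball_self one_pos)
    have := norm_le_norm_add_norm_sub' y x
    rw [Metric.mem_ball, dist_eq_norm] at hy
    linarith
  rw [hderiv.fderiv]
  exact (Summable.of_norm_bounded hu fun k => bound k x (by simp [r])).hasSum

end ExpFDeriv

section MatrixExp

variable {𝕂 m : Type*} [RCLike 𝕂] [Fintype m] [DecidableEq m]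

lemma trace_mul_fderiv_pow_comm (M L X : Matrix m m 𝕂) (k : ℕ) :
    (L * fderiv 𝕂 (fun Y : Matrix m m 𝕂 => Y ^ k) M X).trace
      = (fderiv 𝕂 (fun Y : Matrix m m 𝕂 => Y ^ k) M L * X).trace := by
  -- `erw`: `Y ^ k` uses the power of `Matrix.semiring`, not the one of `linftyOpNormedRing`
  erw [fderiv_pow_apply, fderiv_pow_apply]
  simp only [Finset.mul_sum, Finset.sum_mul, trace_sum]
  rw [← Finset.sum_range_reflect]
  refine Finset.sum_congr rfl fun i hi => ?_
  have hi : k - 1 - (k - 1 - i) = i := by have := Finset.mem_range.mp hi; omega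
  simp only [hi, Matrix.mul_assoc]
  rw [trace_mul_comm (M ^ (k - 1 - i))]
  simp only [Matrix.mul_assoc]

lemma trace_mul_fderiv_exp_comm (M L X : Matrix m m 𝕂) :
    (L * fderiv 𝕂 NormedSpace.exp M X).trace = (fderiv 𝕂 NormedSpace.exp M L * X).trace := by
  have hD := hasSum_fderiv_exp (𝕂 := 𝕂) M
  have hL := (((hD.mapL (ContinuousLinearMap.apply 𝕂 _ X)).mul_left L).map
    (traceAddMonoidHom m 𝕂) continuous_id.matrix_trace)
  have hR := (((hD.mapL (ContinuousLinearMap.apply 𝕂 _ L)).mul_right X).map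
    (traceAddMonoidHom m 𝕂) continuous_id.matrix_trace)
  refine hL.unique (hR.congr_fun fun k => ?_)
  simp only [Function.comp_apply, ContinuousLinearMap.apply_apply,
    _root_.smul_apply, Matrix.mul_smul, Matrix.smul_mul, traceAddMonoidHom_apply, trace_smul]
  exact congrArg _ (trace_mul_fderiv_pow_comm M L X k)

lemma fderiv_exp_transpose_s7 (M K : Matrix m m 𝕂) :
    fderiv 𝕂 NormedSpace.exp Mᵀ Kᵀ = (fderiv 𝕂 NormedSpace.exp M K)ᵀ := by
  let T := (transposeLinearEquiv m m 𝕂 𝕂).toContinuousLinearEquiv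
  have hexp (N : Matrix m m 𝕂) : HasFDerivAt NormedSpace.exp (fderiv 𝕂 NormedSpace.exp N) N :=
    (NormedSpace.exp_analytic (𝕂 := 𝕂) N).differentiableAt.hasFDerivAt
  have h1 : HasFDerivAt (fun N : Matrix m m 𝕂 => NormedSpace.exp Nᵀ)
      ((fderiv 𝕂 NormedSpace.exp Mᵀ).comp (T : Matrix m m 𝕂 →L[𝕂] Matrix m m 𝕂)) M :=
    (hexp Mᵀ).comp M T.hasFDerivAt
  have h2 : HasFDerivAt (fun N : Matrix m m 𝕂 => (NormedSpace.exp N)ᵀ)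
      ((T : Matrix m m 𝕂 →L[𝕂] Matrix m m 𝕂).comp (fderiv 𝕂 NormedSpace.exp M)) M :=
    T.hasFDerivAt.comp M (hexp M)
  simp only [exp_transpose] at h1
  exact congrArg (fun D => D K) (h1.unique h2)

end MatrixExp

theorem grad_comp_dynamic_lie_trivialization_general {n : ℕ}
    (B : Matrix (Fin n) (Fin n) ℝ)
    (f : Matrix (Fin n) (Fin n) ℝ → ℝ)
    (A G : Matrix (Fin n) (Fin n) ℝ)
    (φ : Matrix (Fin n) (Fin n) ℝ →L[ℝ] ℝ)
    (hf : HasFDerivAt f φ (B * NormedSpace.exp (B⁻¹ * A)))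
    (hφ : ∀ H, φ H = (Gᵀ * H).trace) :
    ∃ ψ : Matrix (Fin n) (Fin n) ℝ →L[ℝ] ℝ,
      HasFDerivAt (fun X => f (B * NormedSpace.exp (B⁻¹ * X))) ψ A ∧
        ∀ H, ψ H =
          (((B⁻¹)ᵀ * fderiv ℝ (NormedSpace.exp) (B⁻¹ * A)ᵀ (Bᵀ * G))ᵀ * H).trace := by
  set N := B⁻¹ * A
  set D := fderiv ℝ NormedSpace.exp N
  let mulLeft := ContinuousLinearMap.mul ℝ (Matrix (Fin n) (Fin n) ℝ)
  have hexp : HasFDerivAt (fun X => B * NormedSpace.exp (B⁻¹ * X))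
      ((mulLeft B).comp (D.comp (mulLeft B⁻¹))) A :=
    (mulLeft B).hasFDerivAt.comp A
      ((NormedSpace.exp_analytic (𝕂 := ℝ) N).differentiableAt.hasFDerivAt.comp A
        (mulLeft B⁻¹).hasFDerivAt)
  refine ⟨φ.comp _, hf.comp A hexp, fun H => ?_⟩
  have hD : ((B⁻¹)ᵀ * fderiv ℝ NormedSpace.exp Nᵀ (Bᵀ * G))ᵀ = D (Gᵀ * B) * B⁻¹ := by
    rw [← transpose_transpose (Bᵀ * G), fderiv_exp_transpose_s7, transpose_mul, transpose_mul,
      transpose_transpose, transpose_transpose, transpose_transpose]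
  calc φ (B * D (B⁻¹ * H)) = (Gᵀ * B * D (B⁻¹ * H)).trace := by rw [hφ, Matrix.mul_assoc]
    _ = (D (Gᵀ * B) * (B⁻¹ * H)).trace := trace_mul_fderiv_exp_comm N _ _
    _ = (((B⁻¹)ᵀ * fderiv ℝ NormedSpace.exp Nᵀ (Bᵀ * G))ᵀ * H).trace := by
      rw [hD, Matrix.mul_assoc]

/-- Gradient of the dynamic Lie trivialization `exp_B(A) = B · exp(B⁻¹ A)`: if `f` is
differentiable at `exp_B(A)` with Frobenius gradient `G`, then `f ∘ exp_B` is
differentiable at `A` with Frobenius gradient `(B⁻¹)ᵀ (d exp)_{(B⁻¹A)ᵀ}(Bᵀ G)`. -/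
theorem grad_comp_dynamic_lie_trivialization {n : ℕ}
    (B : Matrix (Fin n) (Fin n) ℝ) (hB : IsUnit B)
    (f : Matrix (Fin n) (Fin n) ℝ → ℝ)
    (A G : Matrix (Fin n) (Fin n) ℝ)
    (φ : Matrix (Fin n) (Fin n) ℝ →L[ℝ] ℝ)
    (hf : HasFDerivAt f φ (B * NormedSpace.exp (B⁻¹ * A)))
    (hφ : ∀ H, φ H = (Gᵀ * H).trace) :
    ∃ ψ : Matrix (Fin n) (Fin n) ℝ →L[ℝ] ℝ,
      HasFDerivAt (fun X => f (B * NormedSpace.exp (B⁻¹ * X))) ψ A ∧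
        ∀ H, ψ H =
          (((B⁻¹)ᵀ * fderiv ℝ (NormedSpace.exp) (B⁻¹ * A)ᵀ (Bᵀ * G))ᵀ * H).trace :=
  grad_comp_dynamic_lie_trivialization_general B f A G φ hf hφ
end

section
/- For all n×n real matrices A and X, left multiplication by exp(A) commutes with the Fréchet derivative of the matrix exponential at −A: exp(A) · (d exp)_{−A}(X) = (d exp)_{−A}(exp(A) · X). -/
open Matrix

attribute [local instance] Matrix.linftyOpNormedRing Matrix.linftyOpNormedAlgebra

open NormedSpace Finset
open scoped Nat RightActions

/-!
Differentiating the exponential series termwise (legitimate since the series of derivatives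
converges locally uniformly), the derivative of `exp` at `B` sends `X` to
`∑ₖ (k!)⁻¹ ∑ᵢ Bᵏ⁻¹⁻ⁱ X Bⁱ`. Every term of this series commutes with left multiplication by any
`C` commuting with `B`, and `exp A` commutes with `-A`.
-/

theorem summable_nat_mul_pow_pred_div_factorial (r : ℝ) :
    Summable fun k : ℕ ↦ k * r ^ (k - 1) / k ! := by
  refine (summable_nat_add_iff 1).mp <| (Real.summable_pow_div_factorial r).congr fun k ↦ ?_
  rw [Nat.add_sub_cancel, Nat.factorial_succ]
  push_cast
  field_simp

section

variable {𝕂 𝔸 : Type*} [RCLike 𝕂] [NormedRing 𝔸] [NormedAlgebra 𝕂 𝔸]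

theorem norm_pow_mul_le (Y X : 𝔸) (a : ℕ) : ‖Y ^ a * X‖ ≤ ‖Y‖ ^ a * ‖X‖ := by
  rcases a.eq_zero_or_pos with rfl | ha
  · simp
  · exact (norm_mul_le _ _).trans (by gcongr; exact norm_pow_le' Y ha)

theorem norm_mul_pow_le (X Y : 𝔸) (b : ℕ) : ‖X * Y ^ b‖ ≤ ‖X‖ * ‖Y‖ ^ b := by
  rcases b.eq_zero_or_pos with rfl | hb
  · simp
  · exact (norm_mul_le _ _).trans (by gcongr; exact norm_pow_le' Y hb)

variable (𝕂) in
noncomputable def powFDeriv (Y : 𝔸) (k : ℕ) : 𝔸 →L[𝕂] 𝔸 :=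
  ∑ i ∈ range k, Y ^ (k - 1 - i) •> ContinuousLinearMap.id 𝕂 𝔸 <• Y ^ i

theorem powFDeriv_apply (Y X : 𝔸) (k : ℕ) :
    powFDeriv 𝕂 Y k X = ∑ i ∈ range k, Y ^ (k - 1 - i) * X * Y ^ i := by
  simp [powFDeriv, mul_assoc]

theorem hasFDerivAt_powFDeriv (Y : 𝔸) (k : ℕ) :
    HasFDerivAt (fun Y : 𝔸 ↦ Y ^ k) (powFDeriv 𝕂 Y k) Y :=
  hasFDerivAt_pow' k

theorem norm_powFDeriv_le {Y : 𝔸} {R : ℝ} (hY : ‖Y‖ ≤ R) (k : ℕ) :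
    ‖powFDeriv 𝕂 Y k‖ ≤ k * R ^ (k - 1) := by
  have hR : 0 ≤ R := (norm_nonneg Y).trans hY
  refine ContinuousLinearMap.opNorm_le_bound _ (by positivity) fun X ↦ ?_
  rw [powFDeriv_apply]
  calc ‖∑ i ∈ range k, Y ^ (k - 1 - i) * X * Y ^ i‖
      ≤ ∑ i ∈ range k, R ^ (k - 1) * ‖X‖ := by
        refine norm_sum_le_of_le _ fun i hi ↦ ?_
        have hik : k - 1 - i + i = k - 1 := by have := mem_range.mp hi; omega
        calc ‖Y ^ (k - 1 - i) * X * Y ^ i‖ ≤ ‖Y‖ ^ (k - 1 - i) * ‖X‖ * ‖Y‖ ^ i :=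
              (norm_mul_pow_le _ _ _).trans (by gcongr; exact norm_pow_mul_le _ _ _)
          _ = ‖Y‖ ^ (k - 1) * ‖X‖ := by rw [mul_right_comm, ← pow_add, hik]
          _ ≤ R ^ (k - 1) * ‖X‖ := by gcongr
    _ = k * R ^ (k - 1) * ‖X‖ := by simp [mul_assoc]

theorem Commute.powFDeriv_mul_left {C Y : 𝔸} (h : Commute C Y) (k : ℕ) (X : 𝔸) :
    powFDeriv 𝕂 Y k (C * X) = C * powFDeriv 𝕂 Y k X := by
  simp only [powFDeriv_apply, mul_sum, ← mul_assoc, (h.pow_right _).eq]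

theorem norm_smul_powFDeriv_le {Y : 𝔸} {R : ℝ} (hY : ‖Y‖ ≤ R) (k : ℕ) :
    ‖(k !⁻¹ : 𝕂) • powFDeriv 𝕂 Y k‖ ≤ k * R ^ (k - 1) / k ! := by
  rw [norm_smul, norm_inv, RCLike.norm_natCast, inv_mul_eq_div]
  gcongr
  exact norm_powFDeriv_le hY k

variable [CompleteSpace 𝔸]

theorem summable_smul_powFDeriv (Y : 𝔸) :
    Summable fun k : ℕ ↦ (k !⁻¹ : 𝕂) • powFDeriv 𝕂 Y k :=
  (summable_nat_mul_pow_pred_div_factorial ‖Y‖).of_norm_bounded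
    (norm_smul_powFDeriv_le le_rfl)

theorem hasFDerivAt_exp_eq_tsum (B : 𝔸) :
    HasFDerivAt NormedSpace.exp (∑' k : ℕ, (k !⁻¹ : 𝕂) • powFDeriv 𝕂 B k) B := by
  -- `Metric.isPreconnected_ball` needs a real normed space structure.
  let : NormedSpace ℝ 𝔸 := NormedSpace.restrictScalars ℝ 𝕂 𝔸
  rw [exp_eq_tsum 𝕂]
  refine hasFDerivAt_tsum_of_isPreconnected (f' := fun k Y ↦ (k !⁻¹ : 𝕂) • powFDeriv 𝕂 Y k)
    (summable_nat_mul_pow_pred_div_factorial (‖B‖ + 1))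
    Metric.isOpen_ball Metric.isPreconnected_ball
    (fun k Y _ ↦ (hasFDerivAt_powFDeriv Y k).fun_const_smul _) (fun k Y hY ↦ ?_)
    (Metric.mem_ball_self one_pos) (expSeries_summable' B) (Metric.mem_ball_self one_pos)
  refine norm_smul_powFDeriv_le ?_ k
  have := mem_ball_iff_norm.mp hY
  linarith [norm_le_norm_add_norm_sub' Y B]

theorem hasSum_fderiv_exp_apply (B X : 𝔸) :
    HasSum (fun k : ℕ ↦ (k !⁻¹ : 𝕂) • powFDeriv 𝕂 B k X) (fderiv 𝕂 NormedSpace.exp B X) := by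
  rw [(hasFDerivAt_exp_eq_tsum B).fderiv]
  exact (summable_smul_powFDeriv B).hasSum.mapL (ContinuousLinearMap.apply 𝕂 𝔸 X)

theorem Commute.mul_fderiv_exp {C B : 𝔸} (h : Commute C B) (X : 𝔸) :
    C * fderiv 𝕂 NormedSpace.exp B X = fderiv 𝕂 NormedSpace.exp B (C * X) := by
  refine ((hasSum_fderiv_exp_apply B X).mul_left C).unique ?_
  simpa only [h.powFDeriv_mul_left, mul_smul_comm] using hasSum_fderiv_exp_apply B (C * X)

end

/-- Left multiplication by `exp A` commutes with the Fréchet derivative of the matrix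
exponential at `-A`. -/
theorem exp_mul_comm_fderiv_exp_neg {n : ℕ} (A X : Matrix (Fin n) (Fin n) ℝ) :
    NormedSpace.exp A * fderiv ℝ (NormedSpace.exp) (-A) X =
      fderiv ℝ (NormedSpace.exp) (-A) (NormedSpace.exp A * X) :=
  (Commute.refl A).neg_right.exp_left.mul_fderiv_exp X
end

section
/- For all n×n real matrices A and X, the Fréchet derivative of the matrix exponential satisfies (d exp)_A(X) = ∑_{k=0}^∞ (−ad_A)ᵏ(exp(A) · X) / (k+1)!, where ad_A(Y) = AY − YA, so that (−ad_A)(Y) = YA − AY, and (−ad_A)ᵏ denotes the k-fold iterate of this linear map; the series converges in the space of n×n real matrices. -/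
open Matrix

attribute [local instance] Matrix.linftyOpNormedRing Matrix.linftyOpNormedAlgebra

/-!
Write `L` and `R` for left and right multiplication by `A`; they commute, and `-ad_A = R - L`.
Differentiating the exponential series termwise gives
`(d exp)_A = ∑_N (∑_{i+j=N} Lⁱ Rʲ) / (N+1)!`, while `exp(A) X = exp(L) X`. So the claim is the
identity `φ(R - L) exp(L) = ∑_N (∑_{i+j=N} Lⁱ Rʲ) / (N+1)!` for `φ(z) = ∑ zᵏ/(k+1)!`, i.e.
`(e^b - e^a)/(b - a) = e^a (e^{b-a} - 1)/(b - a)` for commuting `a, b`. Comparing the terms of total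
degree `N` in the Cauchy product, it reduces to `∑_{i+j=N} aⁱ (a+d)ʲ = ∑_{k+m=N} C(N+1, k+1) dᵏ aᵐ`
for commuting `a, d`: both sides are `((a+d)^(N+1) - a^(N+1))/d`.
-/

open Finset ContinuousLinearMap NormedSpace
open scoped Nat

theorem Commute.sum_antidiagonal_pow_mul_add_pow {R : Type*} [Semiring R] {a d : R}
    (h : Commute a d) (N : ℕ) :
    ∑ p ∈ antidiagonal N, a ^ p.1 * (a + d) ^ p.2 =
      ∑ p ∈ antidiagonal N, (N + 1).choose (p.1 + 1) • (d ^ p.1 * a ^ p.2) := by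
  induction N with
  | zero => simp
  | succ N ih =>
    have hpascal : ∀ p ∈ antidiagonal (N + 1),
        (N + 1 + 1).choose (p.1 + 1) • (d ^ p.1 * a ^ p.2) =
          (N + 1).choose p.1 • (d ^ p.1 * a ^ p.2) +
            (N + 1).choose (p.1 + 1) • (d ^ p.1 * a ^ p.2) :=
      fun p _ => by rw [Nat.choose_succ_succ', add_smul]
    have hcomm : ∀ k m : ℕ, d ^ k * a ^ m * d = d ^ (k + 1) * a ^ m := fun k m => by
      rw [mul_assoc, (h.pow_left m).eq, ← mul_assoc, pow_succ]
    rw [Nat.sum_antidiagonal_succ', sum_congr rfl hpascal, sum_add_distrib,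
      Nat.sum_antidiagonal_succ, Nat.sum_antidiagonal_succ']
    simp only [pow_succ (a + d), ← mul_assoc, ← sum_mul, ih, mul_add, sum_add_distrib]
    simp only [sum_mul, smul_mul_assoc, mul_assoc, ← pow_succ, hcomm, pow_zero, mul_one, one_mul,
      Nat.choose_zero_right, one_smul, Nat.choose_succ_self, zero_smul, zero_add]
    abel

theorem inv_factorial_succ_mul_inv_factorial {K : Type*} [Field K] [CharZero K] (k m : ℕ) :
    ((k + 1)! : K)⁻¹ * (m ! : K)⁻¹ = ((k + m + 1)! : K)⁻¹ * (k + m + 1).choose (k + 1) := by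
  have h := Nat.add_choose_mul_factorial_mul_factorial m (k + 1)
  rw [show m + (k + 1) = k + m + 1 by omega] at h
  have hchoose : ((k + m + 1).choose (k + 1) : K) ≠ 0 :=
    Nat.cast_ne_zero.2 (Nat.choose_pos (by omega)).ne'
  rw [← h]
  push_cast
  field_simp

section

variable {𝔸 : Type*} [NormedRing 𝔸] [NormedAlgebra ℝ 𝔸]

theorem summable_norm_inv_factorial_succ_smul_pow (x : 𝔸) :
    Summable fun k : ℕ => ‖((k + 1)! : ℝ)⁻¹ • x ^ k‖ := by
  refine (norm_expSeries_summable' (𝕂 := ℝ) x).of_nonneg_of_le (fun _ => norm_nonneg _)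
    fun k => ?_
  rw [norm_smul, norm_smul]
  gcongr
  rw [Real.norm_of_nonneg (by positivity), Real.norm_of_nonneg (by positivity)]
  gcongr
  omega

theorem Commute.tsum_inv_factorial_succ_smul_sub_pow_mul_exp [CompleteSpace 𝔸] {a b : 𝔸}
    (h : Commute a b) :
    (∑' k : ℕ, ((k + 1)! : ℝ)⁻¹ • (b - a) ^ k) * NormedSpace.exp a =
      ∑' N : ℕ, ((N + 1)! : ℝ)⁻¹ • ∑ p ∈ antidiagonal N, a ^ p.1 * b ^ p.2 := by
  rw [congrFun (exp_eq_tsum ℝ) a, tsum_mul_tsum_eq_tsum_sum_antidiagonal_of_summable_norm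
    (summable_norm_inv_factorial_succ_smul_pow _) (norm_expSeries_summable' a)]
  refine tsum_congr fun N => ?_
  rw [← add_sub_cancel a b, add_sub_cancel_left,
    (h.sub_right (Commute.refl a)).sum_antidiagonal_pow_mul_add_pow, smul_sum]
  refine sum_congr rfl fun p hp => ?_
  rw [← mem_antidiagonal.mp hp, smul_mul_smul_comm, inv_factorial_succ_mul_inv_factorial,
    ← smul_smul, Nat.cast_smul_eq_nsmul]

theorem ContinuousLinearMap.mul_pow_apply (x y : 𝔸) (n : ℕ) :
    (mul ℝ 𝔸 x ^ n) y = x ^ n * y := by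
  induction n with
  | zero => simp
  | succ n ih => rw [pow_succ', mul_apply_eq_comp, ih, mul_apply', ← mul_assoc, pow_succ']

theorem ContinuousLinearMap.mul_flip_pow_apply (x y : 𝔸) (n : ℕ) :
    ((mul ℝ 𝔸).flip x ^ n) y = y * x ^ n := by
  induction n with
  | zero => simp
  | succ n ih =>
    rw [pow_succ', mul_apply_eq_comp, ih, flip_apply, mul_apply', mul_assoc, pow_succ]

theorem ContinuousLinearMap.commute_mul_mul_flip (x : 𝔸) :
    Commute (mul ℝ 𝔸 x) ((mul ℝ 𝔸).flip x) :=
  ContinuousLinearMap.ext fun y => by simp [mul_apply_eq_comp, mul_assoc]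

theorem ContinuousLinearMap.exp_mul_apply [CompleteSpace 𝔸] (x y : 𝔸) :
    exp (mul ℝ 𝔸 x) y = exp x * y := by
  calc exp (mul ℝ 𝔸 x) y = ∑' m : ℕ, ((m ! : ℝ)⁻¹ • mul ℝ 𝔸 x ^ m) y := by
        rw [congrFun (exp_eq_tsum ℝ) (mul ℝ 𝔸 x)]
        exact ((expSeries_summable' (mul ℝ 𝔸 x)).hasSum.mapL (apply ℝ 𝔸 y)).tsum_eq.symm
    _ = ∑' m : ℕ, (m ! : ℝ)⁻¹ • x ^ m * y := by
        simp only [_root_.smul_apply, mul_pow_apply, smul_mul_assoc]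
    _ = exp x * y := by
        rw [congrFun (exp_eq_tsum ℝ) x, (expSeries_summable' x).tsum_mul_right]

theorem ContinuousLinearMap.opNorm_pow_le {𝕜 E : Type*} [NontriviallyNormedField 𝕜]
    [NormedAddCommGroup E] [NormedSpace 𝕜 E] (T : E →L[𝕜] E) (n : ℕ) : ‖T ^ n‖ ≤ ‖T‖ ^ n := by
  rcases n.eq_zero_or_pos with rfl | hn
  · rw [pow_zero, pow_zero]
    exact norm_id_le
  · exact norm_pow_le' T hn

theorem hasFDerivAt_pow_succ (N : ℕ) (x : 𝔸) :
    HasFDerivAt (fun y : 𝔸 => y ^ (N + 1))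
      (∑ p ∈ antidiagonal N, mul ℝ 𝔸 x ^ p.1 * (mul ℝ 𝔸).flip x ^ p.2) x := by
  refine (hasFDerivAt_pow' (N + 1)).congr_fderiv (ContinuousLinearMap.ext fun h => ?_)
  rw [← Nat.sum_antidiagonal_swap]
  simp only [_root_.sum_apply, mul_apply_eq_comp, mul_pow_apply, mul_flip_pow_apply,
    Prod.fst_swap, Prod.snd_swap]
  rw [Nat.sum_antidiagonal_eq_sum_range_succ (fun i j => x ^ j * (h * x ^ i))]
  simp [mul_assoc]

theorem norm_sum_antidiagonal_mul_pow_mul_flip_pow_le (N : ℕ) (x : 𝔸) :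
    ‖∑ p ∈ antidiagonal N, mul ℝ 𝔸 x ^ p.1 * (mul ℝ 𝔸).flip x ^ p.2‖ ≤ (N + 1) * ‖x‖ ^ N := by
  have hflip : ‖(mul ℝ 𝔸).flip x‖ ≤ ‖x‖ := opNorm_le_bound _ (norm_nonneg _) fun y => by
    rw [flip_apply, mul_apply', mul_comm ‖x‖]
    exact norm_mul_le _ _
  calc _ ≤ ∑ p ∈ antidiagonal N, ‖mul ℝ 𝔸 x ^ p.1 * (mul ℝ 𝔸).flip x ^ p.2‖ := norm_sum_le _ _
    _ ≤ ∑ p ∈ antidiagonal N, ‖x‖ ^ N := sum_le_sum fun p hp => by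
        rw [← mem_antidiagonal.mp hp, pow_add]
        refine (norm_mul_le _ _).trans (mul_le_mul ?_ ?_ (norm_nonneg _) (by positivity))
        · exact (opNorm_pow_le _ _).trans
            (pow_le_pow_left₀ (norm_nonneg _) (opNorm_mul_apply_le _ _ _) _)
        · exact (opNorm_pow_le _ _).trans (pow_le_pow_left₀ (norm_nonneg _) hflip _)
    _ = (N + 1) * ‖x‖ ^ N := by simp

theorem hasFDerivAt_exp_tsum_antidiagonal [CompleteSpace 𝔸] (x : 𝔸) :
    HasFDerivAt exp (∑' N : ℕ, ((N + 1)! : ℝ)⁻¹ •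
      ∑ p ∈ antidiagonal N, mul ℝ 𝔸 x ^ p.1 * (mul ℝ 𝔸).flip x ^ p.2) x := by
  have hexp : (exp : 𝔸 → 𝔸) = fun y => 1 + ∑' N : ℕ, ((N + 1)! : ℝ)⁻¹ • y ^ (N + 1) := by
    funext y
    rw [congrFun (exp_eq_tsum ℝ) y, (expSeries_summable' (𝕂 := ℝ) y).tsum_eq_zero_add]
    simp
  have hbound : ∀ N (y : 𝔸), y ∈ Metric.ball x 1 →
      ‖((N + 1)! : ℝ)⁻¹ • ∑ p ∈ antidiagonal N, mul ℝ 𝔸 y ^ p.1 * (mul ℝ 𝔸).flip y ^ p.2‖ ≤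
        (‖x‖ + 1) ^ N / N ! := fun N y hy => by
    have hy' : ‖y‖ ≤ ‖x‖ + 1 := by
      have := norm_le_norm_add_norm_sub' y x
      rw [Metric.mem_ball, dist_eq_norm] at hy
      linarith
    calc _ = ((N + 1)! : ℝ)⁻¹ *
          ‖∑ p ∈ antidiagonal N, mul ℝ 𝔸 y ^ p.1 * (mul ℝ 𝔸).flip y ^ p.2‖ := by
          rw [norm_smul, Real.norm_of_nonneg (by positivity)]
      _ ≤ ((N + 1)! : ℝ)⁻¹ * ((N + 1) * (‖x‖ + 1) ^ N) := by
          gcongr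
          exact (norm_sum_antidiagonal_mul_pow_mul_flip_pow_le N y).trans (by gcongr)
      _ = (‖x‖ + 1) ^ N / N ! := by
          rw [Nat.factorial_succ]
          push_cast
          field_simp
  rw [hexp]
  exact (hasFDerivAt_tsum_of_isPreconnected (Real.summable_pow_div_factorial _) Metric.isOpen_ball
    (convex_ball x 1).isPreconnected (fun N y _ => (hasFDerivAt_pow_succ N y).const_smul _) hbound
    (Metric.mem_ball_self one_pos) ((summable_nat_add_iff 1).2 (expSeries_summable' (𝕂 := ℝ) x))
    (Metric.mem_ball_self one_pos)).const_add 1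

end

/-- The Fréchet derivative of the matrix exponential is given by the convergent series
`(d exp)_A(X) = ∑_{k=0}^∞ (-ad_A)ᵏ(exp(A) X) / (k+1)!`, where `(-ad_A)(Y) = Y A - A Y`. -/
theorem fderiv_exp_eq_tsum_neg_ad {n : ℕ} (A X : Matrix (Fin n) (Fin n) ℝ) :
    Summable (fun k : ℕ =>
      ((Nat.factorial (k + 1) : ℝ))⁻¹ •
        (fun Y : Matrix (Fin n) (Fin n) ℝ => Y * A - A * Y)^[k]
          (NormedSpace.exp A * X)) ∧
    fderiv ℝ (NormedSpace.exp) A X =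
      ∑' k : ℕ,
        ((Nat.factorial (k + 1) : ℝ))⁻¹ •
          (fun Y : Matrix (Fin n) (Fin n) ℝ => Y * A - A * Y)^[k]
            (NormedSpace.exp A * X) := by
  set L := mul ℝ (Matrix (Fin n) (Fin n) ℝ) A
  set R := (mul ℝ (Matrix (Fin n) (Fin n) ℝ)).flip A
  have hsum := (summable_norm_inv_factorial_succ_smul_pow (R - L)).of_norm
  have hfderiv : fderiv ℝ NormedSpace.exp A =
      (∑' k : ℕ, ((k + 1)! : ℝ)⁻¹ • (R - L) ^ k) * NormedSpace.exp L :=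
    (hasFDerivAt_exp_tsum_antidiagonal A).fderiv.trans
      (commute_mul_mul_flip A).tsum_inv_factorial_succ_smul_sub_pow_mul_exp.symm
  have hiterate : ∀ k, (fun Y : Matrix (Fin n) (Fin n) ℝ => Y * A - A * Y)^[k] = ⇑((R - L) ^ k) :=
    fun k => by rw [FunLike.coe_pow_eq_iterate]; rfl
  have hexp : NormedSpace.exp A * X = NormedSpace.exp L X := (exp_mul_apply A X).symm
  simp only [hiterate, hexp]
  refine ⟨hsum.mapL (apply ℝ _ (NormedSpace.exp L X)), ?_⟩
  rw [hfderiv]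
  exact (apply ℝ _ (NormedSpace.exp L X)).map_tsum hsum
end

section
/- The matrix exponential is surjective onto the complex general linear group: for every invertible n×n complex matrix B there exists an n×n complex matrix A with exp(A) = B. -/
/-!
An invertible `b` in a finite-dimensional complex Banach algebra stays invertible in the closed
commutative subalgebra generated by `b`, so it suffices to treat commutative algebras. There `exp`
is a homomorphism from `(𝔸, +)` to `𝔸ˣ` whose image contains a neighbourhood of `1` by the inverse
function theorem; the image is therefore an open, hence closed, subgroup of `𝔸ˣ`. Finally `𝔸ˣ` is
connected: the complex line through `1` and a unit `u` meets the non-units only at the inverses of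
the finitely many points of the spectrum of `1 - u`, and `ℂ` minus a finite set is path-connected.
-/

open NormedSpace Topology Pointwise

theorem range_exp_mem_nhds_one (𝕂 : Type*) {𝔸 : Type*} [RCLike 𝕂] [NormedRing 𝔸]
    [NormedAlgebra 𝕂 𝔸] [CompleteSpace 𝔸] : Set.range exp ∈ 𝓝 (1 : 𝔸) := by
  have h := (hasStrictFDerivAt_exp_zero (𝕂 := 𝕂) (𝔸 := 𝔸)).map_nhds_eq_of_equiv
    (f' := ContinuousLinearEquiv.refl 𝕂 𝔸)
  rw [exp_zero] at h
  exact h ▸ Filter.range_mem_map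

section Commutative

variable (𝔸 : Type*) [NormedCommRing 𝔸] [NormedAlgebra ℚ 𝔸] [CompleteSpace 𝔸]

def expSubgroup : Subgroup 𝔸ˣ where
  carrier := {u | (u : 𝔸) ∈ Set.range exp}
  one_mem' := ⟨0, exp_zero⟩
  mul_mem' := by
    rintro u v ⟨a, ha⟩ ⟨b, hb⟩
    exact ⟨a + b, by rw [Units.val_mul, ← ha, ← hb, exp_add]⟩
  inv_mem' := by
    rintro u ⟨a, ha⟩
    refine ⟨-a, Units.eq_inv_of_mul_eq_one_left ?_⟩
    rw [← ha, ← exp_add, add_neg_cancel, exp_zero]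

theorem isOpen_expSubgroup (𝕂 : Type*) [RCLike 𝕂] [NormedAlgebra 𝕂 𝔸] :
    IsOpen (expSubgroup 𝔸 : Set 𝔸ˣ) := by
  refine Subgroup.isOpen_of_mem_nhds _ (g := 1) ?_
  rw [Units.isOpenEmbedding_val.isInducing.nhds_eq_comap]
  exact Filter.preimage_mem_comap (range_exp_mem_nhds_one 𝕂)

end Commutative

theorem spectrum.finite_of_finiteDimensional (K : Type*) {A : Type*} [Field K] [Ring A]
    [Algebra K A] [FiniteDimensional K A] (a : A) : (spectrum K a).Finite := by
  refine (Module.End.finite_spectrum (Algebra.lmul K A a)).subset fun μ hμ => ?_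
  rw [spectrum.mem_iff, ← Algebra.lmul_isUnit_iff (R := K), map_sub, AlgHom.commutes] at hμ
  exact hμ

theorem setOf_not_isUnit_one_add_smul_subset {K A : Type*} [Field K] [Ring A] [Algebra K A]
    (w : A) : {z : K | ¬IsUnit (1 + z • w)} ⊆ (spectrum K (-w))⁻¹ := by
  intro z hz
  rw [Set.mem_inv, spectrum.mem_iff]
  intro hunit
  apply hz
  rcases eq_or_ne z 0 with rfl | hz0
  · simp
  · have : 1 + z • w = algebraMap K A z * (algebraMap K A z⁻¹ - -w) := by
      rw [mul_sub, ← map_mul, mul_inv_cancel₀ hz0, map_one, mul_neg, sub_neg_eq_add,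
        Algebra.smul_def]
    rw [this]
    exact ((isUnit_iff_ne_zero.mpr hz0).map _).mul hunit

section FiniteDimensional

variable {𝔸 : Type*} [NormedRing 𝔸] [NormedAlgebra ℂ 𝔸] [FiniteDimensional ℂ 𝔸]

theorem isPathConnected_setOf_isUnit : IsPathConnected {a : 𝔸 | IsUnit a} := by
  refine ⟨1, isUnit_one, fun u hu => ?_⟩
  set bad := {z : ℂ | ¬IsUnit (1 + z • (u - 1))}
  have hbad : bad.Countable :=
    (spectrum.finite_of_finiteDimensional ℂ _).inv.countable.mono
      (setOf_not_isUnit_one_add_smul_subset _)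
  have hrank : 1 < Module.rank ℝ ℂ := by simp [Complex.rank_real_complex]
  have hline : JoinedIn badᶜ (0 : ℂ) 1 :=
    (hbad.isPathConnected_compl_of_one_lt_rank hrank).joinedIn 0 (by simp [bad]) 1
      (by simpa [bad] using hu)
  have hsegment := hline.map (f := fun z : ℂ => 1 + z • (u - 1)) (by fun_prop)
  simp only [zero_smul, add_zero, one_smul, add_sub_cancel] at hsegment
  refine hsegment.mono ?_
  rintro _ ⟨z, hz, rfl⟩
  simpa [bad] using hz

instance Units.preconnectedSpace_of_finiteDimensional : PreconnectedSpace 𝔸ˣ := by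
  rw [preconnectedSpace_iff_univ, ← Units.isOpenEmbedding_val.isInducing.isPreconnected_image,
    Set.image_univ]
  exact isPathConnected_setOf_isUnit.isConnected.isPreconnected

end FiniteDimensional

theorem IsUnit.exists_exp_eq_of_commRing {𝔸 : Type*} [NormedCommRing 𝔸] [NormedAlgebra ℂ 𝔸]
    [FiniteDimensional ℂ 𝔸] {u : 𝔸} (hu : IsUnit u) : ∃ a, exp a = u := by
  let _ : NormedAlgebra ℚ 𝔸 := .restrictScalars ℚ ℂ 𝔸
  have hopen := isOpen_expSubgroup 𝔸 ℂ
  have htop : (expSubgroup 𝔸 : Set 𝔸ˣ) = Set.univ :=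
    IsClopen.eq_univ ⟨Subgroup.isClosed_of_isOpen _ hopen, hopen⟩ ⟨1, one_mem _⟩
  obtain ⟨v, rfl⟩ := hu
  exact (htop.symm ▸ Set.mem_univ v : v ∈ (expSubgroup 𝔸 : Set 𝔸ˣ))

theorem Subalgebra.isUnit_of_isUnit_val_of_finiteDimensional {K A : Type*} [Field K] [Ring A]
    [Algebra K A] {S : Subalgebra K A} [FiniteDimensional K S] {x : S} (hx : IsUnit (x : A)) :
    IsUnit x := by
  have := IsArtinianRing.of_finite K S
  exact IsArtinianRing.isUnit_iff_isRightRegular.mpr fun y z h =>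
    Subtype.ext (hx.isRegular.right (congrArg Subtype.val h))

noncomputable instance Algebra.elemental.normedCommRing {R A : Type*} [CommRing R]
    [NormedRing A] [Algebra R A] (x : A) : NormedCommRing (Algebra.elemental R x) :=
  { toNormedRing := SubringClass.toNormedRing (Algebra.elemental R x), mul_comm := mul_comm }

theorem IsUnit.exists_exp_eq {𝔸 : Type*} [NormedRing 𝔸] [NormedAlgebra ℂ 𝔸]
    [FiniteDimensional ℂ 𝔸] {b : 𝔸} (hb : IsUnit b) : ∃ a, exp a = b := by
  set S := Algebra.elemental ℂ b
  have hbS : IsUnit (⟨b, Algebra.elemental.self_mem ℂ b⟩ : S) :=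
    Subalgebra.isUnit_of_isUnit_val_of_finiteDimensional hb
  obtain ⟨a, ha⟩ := hbS.exists_exp_eq_of_commRing
  let _ : NormedAlgebra ℚ 𝔸 := .restrictScalars ℚ ℂ 𝔸
  let _ : NormedAlgebra ℚ S := .restrictScalars ℚ ℂ S
  refine ⟨a, ?_⟩
  rw [← S.coe_val, ← map_exp S.val continuous_subtype_val, ha]
  rfl

/-- The matrix exponential is surjective onto the complex general linear group: every
invertible complex matrix is the exponential of some matrix. -/
theorem matrix_exp_surjective_onto_GL {n : ℕ} (B : Matrix (Fin n) (Fin n) ℂ)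
    (hB : IsUnit B) :
    ∃ A : Matrix (Fin n) (Fin n) ℂ, NormedSpace.exp A = B := by
  let _ := Matrix.linftyOpNormedRing (n := Fin n) (α := ℂ)
  let _ := Matrix.linftyOpNormedAlgebra (n := Fin n) (R := ℂ) (α := ℂ)
  exact hB.exists_exp_eq
end

section
/- Let B be a symmetric positive definite n×n real matrix with positive definite square root B^{1/2}. Then the map A ↦ B^{1/2} · exp(A) · B^{1/2} is a bijection from the set of symmetric n×n real matrices onto the set of symmetric positive definite n×n real matrices: for every symmetric A the matrix B^{1/2} exp(A) B^{1/2} is symmetric positive definite, and every symmetric positive definite matrix arises this way from a unique symmetric A. -/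
/-!
On self-adjoint elements, `exp` is a bijection onto the strictly positive elements, with inverse
the logarithm of the continuous functional calculus; conjugation `x ↦ u * x * star u` by a unit
permutes the strictly positive elements. For real matrices, self-adjoint means symmetric and
strictly positive means positive definite (for the L² operator norm and the Loewner order).
-/

open Matrix

section CStarAlgebra

variable {A : Type*} [NormedRing A] [StarRing A] [NormedAlgebra ℝ A]
  [ContinuousFunctionalCalculus ℝ A IsSelfAdjoint] [PartialOrder A] [StarOrderedRing A]
  [NonnegSpectrumClass ℝ A]

lemma IsSelfAdjoint.isStrictlyPositive_exp {a : A} (ha : IsSelfAdjoint a) :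
    IsStrictlyPositive (NormedSpace.exp a) := by
  rw [← CFC.real_exp_eq_normedSpace_exp ha, cfc_isStrictlyPositive_iff Real.exp a]
  exact fun x _ => Real.exp_pos x

lemma IsStrictlyPositive.existsUnique_isSelfAdjoint_exp_eq {b : A} (hb : IsStrictlyPositive b) :
    ∃! a : A, IsSelfAdjoint a ∧ NormedSpace.exp a = b :=
  ⟨CFC.log b, ⟨IsSelfAdjoint.log, CFC.exp_log b hb⟩,
    fun a ⟨ha, hab⟩ => hab ▸ (CFC.log_exp a ha).symm⟩

lemma IsStrictlyPositive.existsUnique_isSelfAdjoint_conj_exp_eq {c u : A}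
    (hc : IsStrictlyPositive c) (hu : IsUnit u) :
    ∃! a : A, IsSelfAdjoint a ∧ u * NormedSpace.exp a * star u = c := by
  lift u to Aˣ using hu
  have hb : IsStrictlyPositive (↑u⁻¹ * c * star ↑u⁻¹ : A) :=
    (Units.isUnit _).isStrictlyPositive_star_right_conjugate_iff.mpr hc
  have hconj (x : A) : ↑u * x * star ↑u = c ↔ x = ↑u⁻¹ * c * star ↑u⁻¹ := by
    constructor <;> rintro rfl <;> simp [mul_assoc, ← star_mul]
  simpa only [hconj] using hb.existsUnique_isSelfAdjoint_exp_eq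

end CStarAlgebra

section Matrix

open scoped Matrix.Norms.L2Operator MatrixOrder

variable {ι : Type*} [Fintype ι] [DecidableEq ι]

lemma Matrix.IsHermitian.posDef_mul_exp_mul_conjTranspose {A U : Matrix ι ι ℝ}
    (hA : A.IsHermitian) (hU : IsUnit U) : (U * NormedSpace.exp A * Uᴴ).PosDef :=
  (hU.isStrictlyPositive_star_right_conjugate_iff.mpr
    hA.isSelfAdjoint.isStrictlyPositive_exp).posDef

lemma Matrix.PosDef.existsUnique_isHermitian_mul_exp_mul_conjTranspose_eq {C U : Matrix ι ι ℝ}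
    (hC : C.PosDef) (hU : IsUnit U) :
    ∃! A : Matrix ι ι ℝ, A.IsHermitian ∧ U * NormedSpace.exp A * Uᴴ = C :=
  hC.isStrictlyPositive.existsUnique_isSelfAdjoint_conj_exp_eq hU

end Matrix

theorem sqrt_exp_sqrt_bij_symmetric_posDef_general {n : ℕ}
    (S : Matrix (Fin n) (Fin n) ℝ) (hS : S.PosDef) :
    (∀ A : Matrix (Fin n) (Fin n) ℝ, Aᵀ = A → (S * NormedSpace.exp A * S).PosDef) ∧
      ∀ C : Matrix (Fin n) (Fin n) ℝ, C.PosDef →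
        ∃! A : Matrix (Fin n) (Fin n) ℝ, Aᵀ = A ∧ S * NormedSpace.exp A * S = C := by
  have hSS : Sᴴ = S := hS.isHermitian
  have hsymm (A : Matrix (Fin n) (Fin n) ℝ) : A.IsHermitian ↔ Aᵀ = A := isHermitian_iff_isSymm
  refine ⟨fun A hA => ?_, fun C hC => ?_⟩
  · simpa only [hSS] using ((hsymm A).mpr hA).posDef_mul_exp_mul_conjTranspose hS.isUnit
  · simpa only [hSS, hsymm] using
      hC.existsUnique_isHermitian_mul_exp_mul_conjTranspose_eq hS.isUnit

/-- For a symmetric positive definite `B` with positive definite square root `S = B^{1/2}`,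
the map `A ↦ S · exp(A) · S` is a bijection from the symmetric matrices onto the symmetric
positive definite matrices. -/
theorem sqrt_exp_sqrt_bij_symmetric_posDef {n : ℕ}
    (B S : Matrix (Fin n) (Fin n) ℝ) (hB : B.PosDef) (hS : S.PosDef)
    (hSB : S * S = B) :
    (∀ A : Matrix (Fin n) (Fin n) ℝ, Aᵀ = A → (S * NormedSpace.exp A * S).PosDef) ∧
      ∀ C : Matrix (Fin n) (Fin n) ℝ, C.PosDef →
        ∃! A : Matrix (Fin n) (Fin n) ℝ, Aᵀ = A ∧ S * NormedSpace.exp A * S = C :=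
  sqrt_exp_sqrt_bij_symmetric_posDef_general S hS
end
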